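/- arXiv:2310.10566 — 6 statements merged into one kernel-verified Lean document; each statement's English description precedes it below -/
import Mathlib

section
/- For any graph G and any two vertices u, v with N[u] ⊆ N[v], if both u and v appear in a dominating sequence S of G (where each vertex must footprint some newly dominated vertex), then u appears before v in S. -/
open Finset

variable {V : Type*}

/-- The closed neighborhood of a vertex. -/
def CN (G : SimpleGraph V) (v : V) : Set V := insert v (G.neighborSet v)

/-- A closed neighborhood (legal) sequence: distinct vertices, each footprinting
a vertex not dominated by the closed neighborhoods of earlier vertices. -/
def IsCNSeq (G : SimpleGraph V) (S : List V) : Prop :=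
  S.Nodup ∧ ∀ i : Fin S.length, ∃ u, u ∈ CN G (S.get i) ∧
    ∀ j : Fin S.length, j < i → u ∉ CN G (S.get j)

/-- A dominating sequence: a closed neighborhood sequence whose vertex set dominates. -/
def IsDomSeq (G : SimpleGraph V) (S : List V) : Prop :=
  IsCNSeq G S ∧ ∀ v : V, ∃ u ∈ S, v ∈ CN G u

/-- The Grundy domination number: the maximum length of a dominating sequence. -/
noncomputable def grundyDom (G : SimpleGraph V) : ℕ :=
  sSup {n | ∃ S : List V, IsDomSeq G S ∧ S.length = n}

theorem IsCNSeq.not_cn_subset_of_lt {G : SimpleGraph V} {S : List V} (hS : IsCNSeq G S)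
    {i j : Fin S.length} (hji : j < i) : ¬ CN G (S.get i) ⊆ CN G (S.get j) := fun hsub =>
  let ⟨_, hw, hfresh⟩ := hS.2 i
  hfresh j hji (hsub hw)

theorem closed_nbhd_subset_appears_before_general {V : Type*} [DecidableEq V]
    (G : SimpleGraph V) (S : List V) (hS : IsDomSeq G S)
    (u v : V) (hne : u ≠ v) (hsub : CN G u ⊆ CN G v)
    (hu : u ∈ S) :
    S.idxOf u < S.idxOf v := by
  by_cases hv : v ∈ S
  · have hu' : S.idxOf u < S.length := List.idxOf_lt_length_iff.2 hu
    have hv' : S.idxOf v < S.length := List.idxOf_lt_length_iff.2 hv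
    have hvu : ¬ S.idxOf v < S.idxOf u := fun hvu =>
      hS.1.not_cn_subset_of_lt (i := ⟨_, hu'⟩) (j := ⟨_, hv'⟩) hvu
        (by rwa [List.idxOf_get, List.idxOf_get])
    exact lt_of_le_of_ne (not_lt.1 hvu) fun h => hne ((List.idxOf_inj hu).1 h)
  · rw [List.idxOf_of_notMem hv]
    exact List.idxOf_lt_length_iff.2 hu

/-- If `N[u] ⊆ N[v]` and both `u` and `v` appear in a dominating sequence `S`,
then `u` appears before `v` in `S`. -/
theorem closed_nbhd_subset_appears_before {V : Type*} [DecidableEq V]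
    (G : SimpleGraph V) (S : List V) (hS : IsDomSeq G S)
    (u v : V) (hne : u ≠ v) (hsub : CN G u ⊆ CN G v)
    (hu : u ∈ S) (hv : v ∈ S) :
    S.idxOf u < S.idxOf v :=
  closed_nbhd_subset_appears_before_general G S hS u v hne hsub hu
end

section
/- For any hypergraph H with no isolated vertices, the maximum length of a legal transversal sequence equals the maximum length of an edge covering sequence, i.e., τ_gr(H) = ρ_gr(H). -/
open Finset

variable {X : Type*}

/-- A legal edge sequence of the hypergraph with edge family `E`. -/
def IsLegalEdgeSeq (E : Finset (Finset X)) (L : List (Finset X)) : Prop :=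
  (∀ C ∈ L, C ∈ E) ∧ ∀ i : Fin L.length, ∃ x ∈ L.get i,
    ∀ j : Fin L.length, j < i → x ∉ L.get j

/-- An edge covering sequence: a legal edge sequence whose union is the whole vertex set. -/
def IsEdgeCoverSeq (E : Finset (Finset X)) (L : List (Finset X)) : Prop :=
  IsLegalEdgeSeq E L ∧ ∀ x : X, ∃ C ∈ L, x ∈ C

/-- The Grundy cover number `ρ_gr`: maximum length of an edge covering sequence. -/
noncomputable def rhoGr (E : Finset (Finset X)) : ℕ :=
  sSup {n | ∃ L : List (Finset X), IsEdgeCoverSeq E L ∧ L.length = n}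

/-- A legal transversal sequence of the hypergraph with edge family `E`. -/
def IsLegalTransversalSeq (E : Finset (Finset X)) (S : List X) : Prop :=
  ∀ i : Fin S.length, ∃ C ∈ E, S.get i ∈ C ∧ ∀ j : Fin S.length, j < i → S.get j ∉ C

/-- `τ_gr`: maximum length of a legal transversal sequence. -/
noncomputable def tauGr (E : Finset (Finset X)) : ℕ :=
  sSup {n | ∃ S : List X, IsLegalTransversalSeq E S ∧ S.length = n}

/-!
Reversing a legal transversal sequence `v₁, …, v_k` together with witnessing edges
`E₁, …, E_k` gives the legal edge sequence `E_k, …, E₁`, in which `v_i` is private to `E_i`,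
and conversely; so `τ_gr` is the largest length of a legal edge sequence. The edges of a legal
edge sequence are distinct, so a longest one exists, and when there are no isolated vertices it
covers every vertex: an uncovered vertex lies in an edge that could be appended. Hence that
largest length is `ρ_gr` as well.
-/

variable {E : Finset (Finset X)}

def legalEdgeSeqLengths (E : Finset (Finset X)) : Set ℕ :=
  {n | ∃ L : List (Finset X), IsLegalEdgeSeq E L ∧ L.length = n}

namespace IsLegalEdgeSeq

variable {L : List (Finset X)}

theorem nil : IsLegalEdgeSeq E [] :=
  ⟨by simp, fun i => i.elim0⟩

theorem nodup (hL : IsLegalEdgeSeq E L) : L.Nodup := by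
  refine List.nodup_iff_injective_get.2 fun i j hij => ?_
  by_contra hne
  rcases lt_or_gt_of_ne hne with hlt | hlt
  · obtain ⟨x, hx, hxL⟩ := hL.2 j
    exact hxL i hlt (hij ▸ hx)
  · obtain ⟨x, hx, hxL⟩ := hL.2 i
    exact hxL j hlt (hij.symm ▸ hx)

theorem length_le_card (hL : IsLegalEdgeSeq E L) : L.length ≤ E.card := by
  classical
  rw [← List.toFinset_card_of_nodup hL.nodup]
  exact Finset.card_le_card fun C hC => hL.1 C (List.mem_toFinset.1 hC)

theorem append_singleton (hL : IsLegalEdgeSeq E L) {C : Finset X} (hC : C ∈ E) {x : X}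
    (hxC : x ∈ C) (hxL : ∀ D ∈ L, x ∉ D) : IsLegalEdgeSeq E (L ++ [C]) := by
  refine ⟨by simpa [or_imp, forall_and] using ⟨hL.1, hC⟩, fun ⟨i, hi⟩ => ?_⟩
  rcases Nat.lt_succ_iff_lt_or_eq.1 (by simpa using hi) with hi | rfl
  · obtain ⟨y, hy, hyL⟩ := hL.2 ⟨i, hi⟩
    refine ⟨y, by simpa [List.getElem_append_left hi] using hy, fun ⟨j, hj⟩ hji => ?_⟩
    have hji : j < i := hji
    simpa [List.getElem_append_left (hji.trans hi)] using hyL ⟨j, hji.trans hi⟩ hji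
  · refine ⟨x, by simpa using hxC, fun ⟨j, hj⟩ hji => ?_⟩
    have hji : j < L.length := hji
    simpa [List.getElem_append_left hji] using hxL _ (L.getElem_mem hji)

theorem exists_legalTransversalSeq (hL : IsLegalEdgeSeq E L) :
    ∃ S : List X, IsLegalTransversalSeq E S ∧ S.length = L.length := by
  choose x hx hxL using hL.2
  refine ⟨List.ofFn fun i => x i.rev, fun i => ?_, List.length_ofFn⟩
  set k := (Fin.cast List.length_ofFn i).rev
  refine ⟨L.get k, hL.1 _ (L.get_mem k), by rw [List.get_ofFn]; exact hx k, fun j hj => ?_⟩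
  rw [List.get_ofFn]
  exact hxL _ _ (Fin.rev_lt_rev.2 hj)

end IsLegalEdgeSeq

theorem IsLegalTransversalSeq.exists_legalEdgeSeq {S : List X}
    (hS : IsLegalTransversalSeq E S) :
    ∃ L : List (Finset X), IsLegalEdgeSeq E L ∧ L.length = S.length := by
  choose C hCE hSC hSC' using hS
  refine ⟨List.ofFn fun i => C i.rev, ⟨?_, fun i => ?_⟩, List.length_ofFn⟩
  · simp only [List.mem_ofFn, forall_exists_index]
    rintro _ i rfl
    exact hCE _
  · set k := (Fin.cast List.length_ofFn i).rev
    refine ⟨S.get k, by rw [List.get_ofFn]; exact hSC k, fun j hj => ?_⟩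
    rw [List.get_ofFn]
    exact hSC' _ _ (Fin.rev_lt_rev.2 hj)

theorem tauGr_eq_sSup_legalEdgeSeqLengths (E : Finset (Finset X)) :
    tauGr E = sSup (legalEdgeSeqLengths E) := by
  refine congrArg sSup (Set.ext fun n => ⟨?_, ?_⟩)
  · rintro ⟨S, hS, rfl⟩
    obtain ⟨L, hL, hlen⟩ := hS.exists_legalEdgeSeq
    exact ⟨L, hL, hlen⟩
  · rintro ⟨L, hL, rfl⟩
    obtain ⟨S, hS, hlen⟩ := hL.exists_legalTransversalSeq
    exact ⟨S, hS, hlen⟩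

theorem bddAbove_legalEdgeSeqLengths (E : Finset (Finset X)) :
    BddAbove (legalEdgeSeqLengths E) :=
  ⟨E.card, by rintro _ ⟨L, hL, rfl⟩; exact hL.length_le_card⟩

theorem exists_edgeCoverSeq_length_eq_sSup (hiso : ∀ x : X, ∃ C ∈ E, x ∈ C) :
    ∃ L : List (Finset X), IsEdgeCoverSeq E L ∧ L.length = sSup (legalEdgeSeqLengths E) := by
  obtain ⟨L, hL, hlen⟩ := Nat.sSup_mem (s := legalEdgeSeqLengths E)
    ⟨0, [], IsLegalEdgeSeq.nil, rfl⟩ (bddAbove_legalEdgeSeqLengths E)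
  refine ⟨L, ⟨hL, fun x => ?_⟩, hlen⟩
  by_contra! hx
  obtain ⟨C, hC, hxC⟩ := hiso x
  have hlonger : L.length + 1 ∈ legalEdgeSeqLengths E :=
    ⟨L ++ [C], hL.append_singleton hC hxC hx, by simp⟩
  have := le_csSup (bddAbove_legalEdgeSeqLengths E) hlonger
  omega

theorem rhoGr_eq_sSup_legalEdgeSeqLengths (hiso : ∀ x : X, ∃ C ∈ E, x ∈ C) :
    rhoGr E = sSup (legalEdgeSeqLengths E) := by
  have hsub : {n | ∃ L : List (Finset X), IsEdgeCoverSeq E L ∧ L.length = n} ⊆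
      legalEdgeSeqLengths E := by
    rintro _ ⟨L, hL, rfl⟩
    exact ⟨L, hL.1, rfl⟩
  obtain ⟨L, hL, hlen⟩ := exists_edgeCoverSeq_length_eq_sSup hiso
  refine le_antisymm (csSup_le_csSup (bddAbove_legalEdgeSeqLengths E) ⟨_, L, hL, rfl⟩ hsub) ?_
  rw [← hlen]
  exact le_csSup ((bddAbove_legalEdgeSeqLengths E).mono hsub) ⟨L, hL, rfl⟩

theorem tauGr_eq_rhoGr_general (E : Finset (Finset X))
    (hiso : ∀ x : X, ∃ C ∈ E, x ∈ C) :
    tauGr E = rhoGr E := by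
  rw [tauGr_eq_sSup_legalEdgeSeqLengths, rhoGr_eq_sSup_legalEdgeSeqLengths hiso]

/-- For any hypergraph without isolated vertices, `τ_gr(H) = ρ_gr(H)`. -/
theorem tauGr_eq_rhoGr [Fintype X] [DecidableEq X] (E : Finset (Finset X))
    (hiso : ∀ x : X, ∃ C ∈ E, x ∈ C) :
    tauGr E = rhoGr E :=
  tauGr_eq_rhoGr_general E hiso
end

section
/- Let G be a graph on vertices v_1, ..., v_n, and let G' be the co-bipartite graph on V_1 ∪ V_2 where V_1 = {v_i^1} and V_2 = {v_i^2} are cliques, and v_i^1 is adjacent to v_j^2 if and only if v_j ∈ N_G[v_i]. Then for every positive integer k, γ_gr(G) ≥ k if and only if γ_gr(G') ≥ k. -/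
open Finset

variable {V : Type*}

/-- The co-bipartite graph `G'` built from `G`: two clique copies `V₁, V₂` of `V(G)`,
with `vᵢ¹` adjacent to `vⱼ²` iff `vⱼ ∈ N_G[vᵢ]`. -/
def cobip (G : SimpleGraph V) : SimpleGraph (V ⊕ V) :=
  SimpleGraph.fromRel (fun u v =>
    match u, v with
    | Sum.inl _, Sum.inl _ => True
    | Sum.inr _, Sum.inr _ => True
    | Sum.inl i, Sum.inr j => i = j ∨ G.Adj i j
    | _, _ => False)

/-!
Only legal sequences matter: a legal sequence can always be extended to a dominating one, so
`k ≤ γ_gr` iff there is a legal sequence of length `k`.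

A legal sequence `u₁, …, uₘ` of `G` stays legal in `G'` as `u₁¹, …, uₘ¹`, the footprint `y²`
of `uᵢ¹` being given by a footprint `y` of `uᵢ`. Conversely, in a legal sequence of `G'` all
vertices but the last lie in one clique, since after a vertex of each clique everything is
dominated; by the symmetry exchanging `V₁` and `V₂` it is `V₁`. The vertices played there
after the first one footprint only in `V₂`, so their projections form a legal sequence of
`G`, and a footprint `y²` of the last vertex yields a fresh vertex `y` to append to it.
-/

section

variable {W : Type*} {G : SimpleGraph V} {H : SimpleGraph W}

lemma mem_CN {u v : V} : v ∈ CN G u ↔ v = u ∨ G.Adj u v := Iff.rfl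

lemma mem_CN_comm {u v : V} : u ∈ CN G v ↔ v ∈ CN G u := by
  simp only [mem_CN, eq_comm, G.adj_comm]

lemma self_mem_CN (u : V) : u ∈ CN G u := Set.mem_insert u _

lemma isCNSeq_iff_take {S : List V} :
    IsCNSeq G S ↔
      S.Nodup ∧ ∀ i (hi : i < S.length), ∃ u ∈ CN G S[i], ∀ w ∈ S.take i, u ∉ CN G w := by
  refine and_congr_right fun _ => ⟨fun h i hi => ?_, fun h i => ?_⟩
  · obtain ⟨u, hu, hfresh⟩ := h ⟨i, hi⟩
    refine ⟨u, hu, fun w hw => ?_⟩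
    obtain ⟨j, hj, rfl⟩ := List.mem_take_iff_getElem.1 hw
    exact hfresh ⟨j, by omega⟩ (Fin.mk_lt_mk.2 (by omega))
  · obtain ⟨u, hu, hfresh⟩ := h i i.isLt
    exact ⟨u, hu, fun j hj => hfresh _ (List.mem_take_iff_getElem.2 ⟨j, by omega, rfl⟩)⟩

lemma isCNSeq_nil : IsCNSeq G [] := isCNSeq_iff_take.2 ⟨List.nodup_nil, by simp⟩

lemma isCNSeq_append_singleton_iff {S : List V} {v : V} :
    IsCNSeq G (S ++ [v]) ↔ IsCNSeq G S ∧ ∃ u ∈ CN G v, ∀ w ∈ S, u ∉ CN G w := by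
  have get_left : ∀ i (hi : i < S.length), (S ++ [v])[i]'(by simp; omega) = S[i] :=
    fun i hi => List.getElem_append_left hi
  have take_left : ∀ i ≤ S.length, (S ++ [v]).take i = S.take i :=
    fun i hi => List.take_append_of_le_length hi
  simp only [isCNSeq_iff_take]
  constructor
  · rintro ⟨hnd, hleg⟩
    refine ⟨⟨(List.nodup_append.1 hnd).1, fun i hi => ?_⟩, ?_⟩
    · simpa [get_left i hi, take_left i hi.le] using hleg i (by simp; omega)
    · simpa using hleg S.length (by simp)
  · rintro ⟨⟨hnd, hleg⟩, u, hu, hfresh⟩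
    have hvS : v ∉ S := fun hv => hfresh v hv hu
    refine ⟨hnd.append (List.nodup_singleton v) (by simpa using hvS), fun i hi => ?_⟩
    rcases Nat.lt_or_ge i S.length with hi' | hi'
    · simpa [get_left i hi', take_left i hi'.le] using hleg i hi'
    · obtain rfl : i = S.length := by simp at hi; omega
      simpa using ⟨u, hu, hfresh⟩

lemma isCNSeq_singleton (v : V) : IsCNSeq G [v] :=
  isCNSeq_append_singleton_iff (S := []).2 ⟨isCNSeq_nil, v, self_mem_CN v, by simp⟩

lemma IsCNSeq.map {f g : V → W} (hfg : ∀ u w, g u ∈ CN H (f w) ↔ u ∈ CN G w) {S : List V}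
    (hS : IsCNSeq G S) : IsCNSeq H (S.map f) := by
  induction S using List.reverseRecOn with
  | nil => exact isCNSeq_nil
  | append_singleton S v ih =>
    obtain ⟨hS, u, hu, hfresh⟩ := isCNSeq_append_singleton_iff.1 hS
    rw [List.map_append, List.map_singleton, isCNSeq_append_singleton_iff]
    exact ⟨ih hS, g u, (hfg u v).2 hu, by simpa [hfg] using hfresh⟩

lemma IsCNSeq.length_le_natCard [Finite V] {S : List V} (hS : IsCNSeq G S) :
    S.length ≤ Nat.card V :=
  hS.1.length_le_natCard

lemma IsCNSeq.exists_isDomSeq [Finite V] {S : List V} (hS : IsCNSeq G S) :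
    ∃ T, IsDomSeq G T ∧ S.length ≤ T.length := by
  by_cases hdom : ∀ v, ∃ u ∈ S, v ∈ CN G u
  · exact ⟨S, ⟨hS, hdom⟩, le_rfl⟩
  push Not at hdom
  obtain ⟨v, hv⟩ := hdom
  have hSv : IsCNSeq G (S ++ [v]) := isCNSeq_append_singleton_iff.2 ⟨hS, v, self_mem_CN v, hv⟩
  obtain ⟨T, hT, hlen⟩ := hSv.exists_isDomSeq
  exact ⟨T, hT, by simp at hlen; omega⟩
termination_by Nat.card V - S.length
decreasing_by have := hSv.length_le_natCard; simp at this ⊢; omega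

lemma le_grundyDom_iff_exists_isCNSeq [Finite V] {k : ℕ} :
    k ≤ grundyDom G ↔ ∃ S, IsCNSeq G S ∧ k ≤ S.length := by
  set lengths := {n | ∃ S, IsDomSeq G S ∧ S.length = n}
  have hbdd : BddAbove lengths :=
    ⟨Nat.card V, by rintro _ ⟨S, hS, rfl⟩; exact hS.1.length_le_natCard⟩
  constructor
  · intro hk
    obtain ⟨T, hT, -⟩ := (isCNSeq_nil (G := G)).exists_isDomSeq
    obtain ⟨S, hS, hlen⟩ := Nat.sSup_mem (s := lengths) ⟨_, T, hT, rfl⟩ hbdd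
    exact ⟨S, hS.1, hlen ▸ hk⟩
  · rintro ⟨S, hS, hk⟩
    obtain ⟨T, hT, hlen⟩ := hS.exists_isDomSeq
    exact hk.trans (hlen.trans (le_csSup hbdd ⟨T, hT, rfl⟩))

open Sum

@[simp]
lemma cobip_adj_inl_inl {a b : V} : (cobip G).Adj (inl a) (inl b) ↔ a ≠ b := by
  simp [cobip]

@[simp]
lemma cobip_adj_inr_inr {a b : V} : (cobip G).Adj (inr a) (inr b) ↔ a ≠ b := by
  simp [cobip]

@[simp]
lemma cobip_adj_inl_inr {a b : V} : (cobip G).Adj (inl a) (inr b) ↔ b ∈ CN G a := by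
  simp [cobip, mem_CN, eq_comm]

@[simp]
lemma cobip_adj_inr_inl {a b : V} : (cobip G).Adj (inr a) (inl b) ↔ a ∈ CN G b := by
  simp [cobip, mem_CN, eq_comm]

lemma inl_mem_CN_cobip_inl (a b : V) : inl a ∈ CN (cobip G) (inl b) := by
  simpa [mem_CN, eq_comm] using eq_or_ne a b

lemma inr_mem_CN_cobip_inr (a b : V) : inr a ∈ CN (cobip G) (inr b) := by
  simpa [mem_CN, eq_comm] using eq_or_ne a b

lemma inr_mem_CN_cobip_inl {a b : V} : inr a ∈ CN (cobip G) (inl b) ↔ a ∈ CN G b := by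
  simp [mem_CN (u := inl b)]

lemma swap_mem_CN_cobip_swap {x y : V ⊕ V} :
    x.swap ∈ CN (cobip G) y.swap ↔ x ∈ CN (cobip G) y := by
  cases x <;> cases y <;> simp [mem_CN (G := cobip G), eq_comm, mem_CN_comm]

lemma IsCNSeq.map_inl_cobip {S : List V} (hS : IsCNSeq G S) : IsCNSeq (cobip G) (S.map inl) :=
  hS.map fun _ _ => inr_mem_CN_cobip_inl

lemma mem_range_map_inl_or_mem_range_map_inr_of_isCNSeq_cobip {A : List (V ⊕ V)} {t : V ⊕ V}
    (h : IsCNSeq (cobip G) (A ++ [t])) :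
    A ∈ Set.range (List.map inl) ∨ A ∈ Set.range (List.map inr) := by
  obtain ⟨-, w, -, hfresh⟩ := isCNSeq_append_singleton_iff.1 h
  simp only [Set.range_list_map, Set.range_inl, Set.range_inr, Set.mem_ofPred_eq]
  -- once both cliques have been entered, every vertex is dominated
  by_contra! ⟨⟨_ | b, hb, hbl⟩, ⟨a | _, ha, har⟩⟩
  all_goals simp at hbl har
  cases w with
  | inl c => exact hfresh _ ha (inl_mem_CN_cobip_inl c a)
  | inr c => exact hfresh _ hb (inr_mem_CN_cobip_inr c b)

lemma exists_footprint_of_isCNSeq_cobip {us : List V} (hus : us ≠ []) {t : V ⊕ V}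
    (h : IsCNSeq (cobip G) (us.map inl ++ [t])) :
    ∃ y, inr y ∈ CN (cobip G) t ∧ ∀ u ∈ us, y ∉ CN G u := by
  obtain ⟨-, w, hw, hfresh⟩ := isCNSeq_append_singleton_iff.1 h
  obtain ⟨u₀, hu₀⟩ := List.exists_mem_of_ne_nil us hus
  cases w with
  | inl x => exact absurd (inl_mem_CN_cobip_inl x u₀) (hfresh _ (List.mem_map_of_mem hu₀))
  | inr y =>
    exact ⟨y, hw, fun u hu hy => hfresh _ (List.mem_map_of_mem hu) (inr_mem_CN_cobip_inl.2 hy)⟩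

lemma IsCNSeq.of_map_inl_cobip {us : List V} (h : IsCNSeq (cobip G) (us.map inl)) :
    IsCNSeq G us := by
  induction us using List.reverseRecOn with
  | nil => exact isCNSeq_nil
  | append_singleton us v ih =>
    rw [List.map_append, List.map_singleton] at h
    refine isCNSeq_append_singleton_iff.2 ⟨ih (isCNSeq_append_singleton_iff.1 h).1, ?_⟩
    rcases eq_or_ne us [] with rfl | hus
    · exact ⟨v, self_mem_CN v, by simp⟩
    · obtain ⟨y, hy, hfresh⟩ := exists_footprint_of_isCNSeq_cobip hus h
      exact ⟨y, inr_mem_CN_cobip_inl.1 hy, hfresh⟩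

lemma exists_isCNSeq_of_isCNSeq_cobip_map_inl_append {us : List V} {t : V ⊕ V}
    (h : IsCNSeq (cobip G) (us.map inl ++ [t])) :
    ∃ S, IsCNSeq G S ∧ S.length = us.length + 1 := by
  rcases eq_or_ne us [] with rfl | hus
  · rcases t with v | v <;> exact ⟨[v], isCNSeq_singleton v, rfl⟩
  obtain ⟨y, -, hfresh⟩ := exists_footprint_of_isCNSeq_cobip hus h
  have hus : IsCNSeq G us := (isCNSeq_append_singleton_iff.1 h).1.of_map_inl_cobip
  exact ⟨us ++ [y], isCNSeq_append_singleton_iff.2 ⟨hus, y, self_mem_CN y, hfresh⟩, by simp⟩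

lemma exists_isCNSeq_of_isCNSeq_cobip {T : List (V ⊕ V)} (hT : IsCNSeq (cobip G) T) :
    ∃ S, IsCNSeq G S ∧ S.length = T.length := by
  rcases T.eq_nil_or_concat' with rfl | ⟨A, t, rfl⟩
  · exact ⟨[], isCNSeq_nil, rfl⟩
  rcases mem_range_map_inl_or_mem_range_map_inr_of_isCNSeq_cobip hT with ⟨us, rfl⟩ | ⟨us, rfl⟩
  · simpa using exists_isCNSeq_of_isCNSeq_cobip_map_inl_append hT
  · have hswap := hT.map (f := Sum.swap) (g := Sum.swap) fun _ _ => swap_mem_CN_cobip_swap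
    simp only [List.map_append, List.map_map, List.map_singleton, Function.comp_def,
      Sum.swap_inr] at hswap
    simpa using exists_isCNSeq_of_isCNSeq_cobip_map_inl_append hswap

end

theorem grundyDom_iff_grundyDom_cobip_general {V : Type*} [Fintype V]
    (G : SimpleGraph V) (k : ℕ) :
    k ≤ grundyDom G ↔ k ≤ grundyDom (cobip G) := by
  simp only [le_grundyDom_iff_exists_isCNSeq]
  constructor
  · rintro ⟨S, hS, hk⟩
    exact ⟨S.map Sum.inl, hS.map_inl_cobip, by simpa using hk⟩
  · rintro ⟨T, hT, hk⟩
    obtain ⟨S, hS, hlen⟩ := exists_isCNSeq_of_isCNSeq_cobip hT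
    exact ⟨S, hS, hlen ▸ hk⟩

/-- For every positive integer `k`, `γ_gr(G) ≥ k` iff `γ_gr(G') ≥ k`. -/
theorem grundyDom_iff_grundyDom_cobip {V : Type*} [Fintype V] [DecidableEq V]
    (G : SimpleGraph V) (k : ℕ) (hk : 0 < k) :
    k ≤ grundyDom G ↔ k ≤ grundyDom (cobip G) :=
  grundyDom_iff_grundyDom_cobip_general G k
end

section
/- Let G be a graph and A a set of open twins in G (all vertices in A have equal open neighborhoods). Then there exists a Grundy dominating sequence S of G (a dominating sequence of maximum length) in which all vertices of A that appear in S appear consecutively. -/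
/-!
Start from any Grundy dominating sequence `P ++ a :: T`, where `a` is its first vertex in `A`.
For a twin `w` after `a` we have `N(w) = N(a) ⊆ N[a]`, so `w` can only footprint itself; hence
`w` stays legal when all twins of `T` are moved directly behind `a`. A vertex `x ∉ A` of `T` keeps
its old footprint `u` although twins `w` now precede it: `u ∉ N[a] ⊇ N(w)`, and `u ≠ w` because
`w ∉ N[x]`. The new sequence is a permutation of the old one, so it still dominates and has
maximum length.
-/

open Finset

variable {V : Type*}

def Footprints (G : SimpleGraph V) (L : List V) (x : V) : Prop :=
  ∃ u ∈ CN G x, ∀ y ∈ L, u ∉ CN G y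

def IsLegalSeq (G : SimpleGraph V) (S : List V) : Prop :=
  ∀ pre x suf, S = pre ++ x :: suf → Footprints G pre x

def IsOpenTwins (G : SimpleGraph V) (A : Set V) : Prop :=
  ∀ u ∈ A, ∀ v ∈ A, G.neighborSet u = G.neighborSet v

def AppearConsecutively (A : Set V) (S : List V) : Prop :=
  ∀ p q r : Fin S.length, p ≤ q → q ≤ r → S.get p ∈ A → S.get r ∈ A → S.get q ∈ A

variable {G : SimpleGraph V}

theorem Footprints.mono {L L' : List V} {x : V} (h : Footprints G L' x) (hL : L ⊆ L') :
    Footprints G L x :=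
  let ⟨u, hux, hu⟩ := h
  ⟨u, hux, fun y hy => hu y (hL hy)⟩

theorem isCNSeq_iff_nodup_isLegalSeq {S : List V} :
    IsCNSeq G S ↔ S.Nodup ∧ IsLegalSeq G S := by
  refine and_congr_right fun _ => ⟨?_, ?_⟩
  · rintro h pre x suf rfl
    have hi : pre.length < (pre ++ x :: suf).length := by simp
    obtain ⟨u, hu, hpre⟩ := h ⟨pre.length, hi⟩
    refine ⟨u, by simpa using hu, fun y hy => ?_⟩
    obtain ⟨j, hj, rfl⟩ := List.getElem_of_mem hy
    simpa [List.getElem_append_left hj] using hpre ⟨j, by simp; omega⟩ (by simpa [Fin.lt_def])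
  · intro h i
    have hS : S = S.take i ++ S[(i : ℕ)] :: S.drop (i + 1) := by
      rw [← List.drop_eq_getElem_cons i.isLt, List.take_append_drop]
    obtain ⟨u, hu, hpre⟩ := h _ _ _ hS
    refine ⟨u, hu, fun j hj => hpre _ (List.mem_take_iff_getElem.mpr ⟨j, ?_, rfl⟩)⟩
    simp only [Fin.lt_def] at hj
    omega

theorem isLegalSeq_append {L M : List V} :
    IsLegalSeq G (L ++ M) ↔
      IsLegalSeq G L ∧ ∀ pre x suf, M = pre ++ x :: suf → Footprints G (L ++ pre) x := by
  refine ⟨fun h => ⟨?_, ?_⟩, ?_⟩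
  · rintro pre x suf rfl
    exact h pre x (suf ++ M) (by simp)
  · rintro pre x suf rfl
    exact h (L ++ pre) x suf (by simp)
  · rintro ⟨hL, hM⟩ pre x suf heq
    rcases List.append_eq_append_iff.mp heq with ⟨m, rfl, hm⟩ | ⟨c, hc, hpre⟩
    · exact hM m x suf hm
    · cases c with
      | nil =>
        rw [List.append_nil] at hc
        subst hc
        simpa using hM [] x suf (by simpa using hpre.symm)
      | cons z c =>
        obtain ⟨rfl, rfl⟩ := List.cons_eq_cons.mp hpre
        exact hL pre x c hc

theorem isLegalSeq_append_singleton {L : List V} {x : V} :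
    IsLegalSeq G (L ++ [x]) ↔ IsLegalSeq G L ∧ Footprints G L x := by
  rw [isLegalSeq_append]
  refine and_congr_right fun _ => ⟨fun h => by simpa using h [] x [] rfl, ?_⟩
  rintro h pre y suf hy
  obtain ⟨rfl, rfl, rfl⟩ : pre = [] ∧ y = x ∧ suf = [] := by
    simpa [List.singleton_eq_append_iff] using hy
  simpa using h

theorem IsCNSeq.append_singleton {S : List V} {v : V} (hS : IsCNSeq G S)
    (hv : ∀ y ∈ S, v ∉ CN G y) : IsCNSeq G (S ++ [v]) := by
  obtain ⟨hnd, hleg⟩ := isCNSeq_iff_nodup_isLegalSeq.mp hS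
  refine isCNSeq_iff_nodup_isLegalSeq.mpr
    ⟨?_, isLegalSeq_append_singleton.mpr ⟨hleg, v, ?_, hv⟩⟩
  · exact hnd.append (List.nodup_singleton v)
      (by simpa using fun h => hv v h (Set.mem_insert v _))
  · exact Set.mem_insert v _

theorem exists_isDomSeq_length_eq_grundyDom [Fintype V] (G : SimpleGraph V) :
    ∃ S : List V, IsDomSeq G S ∧ S.length = grundyDom G := by
  set T : Set ℕ := {n | ∃ S : List V, IsCNSeq G S ∧ S.length = n}
  have hT : BddAbove T :=
    ⟨Fintype.card V, by rintro _ ⟨S, hS, rfl⟩; exact hS.1.length_le_card⟩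
  obtain ⟨S, hS, hlen⟩ : sSup T ∈ T :=
    Nat.sSup_mem ⟨0, [], ⟨List.nodup_nil, fun i => i.elim0⟩, rfl⟩ hT
  have hdom : ∀ v, ∃ u ∈ S, v ∈ CN G u := by
    by_contra! ⟨v, hv⟩
    have := le_csSup hT ⟨_, hS.append_singleton hv, rfl⟩
    simp only [List.length_append, List.length_singleton] at this
    omega
  have hmax : IsGreatest {n | ∃ S : List V, IsDomSeq G S ∧ S.length = n} S.length := by
    refine ⟨⟨S, ⟨hS, hdom⟩, rfl⟩, ?_⟩
    rintro _ ⟨S', hS', rfl⟩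
    exact hlen ▸ le_csSup hT ⟨S', hS'.1, rfl⟩
  exact ⟨S, ⟨hS, hdom⟩, hmax.csSup_eq.symm⟩

theorem IsDomSeq.of_perm {S S' : List V} (hS : IsDomSeq G S) (hp : S'.Perm S)
    (hleg : IsLegalSeq G S') : IsDomSeq G S' := by
  refine ⟨isCNSeq_iff_nodup_isLegalSeq.mpr ⟨hp.nodup_iff.mpr hS.1.1, hleg⟩, fun v => ?_⟩
  obtain ⟨u, hu, hvu⟩ := hS.2 v
  exact ⟨u, hp.mem_iff.mpr hu, hvu⟩

theorem appearConsecutively_append {A : Set V} {L₁ M L₂ : List V} (h₁ : ∀ y ∈ L₁, y ∉ A)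
    (hM : ∀ y ∈ M, y ∈ A) (h₂ : ∀ y ∈ L₂, y ∉ A) :
    AppearConsecutively A (L₁ ++ M ++ L₂) := by
  have key : ∀ i (hi : i < (L₁ ++ M ++ L₂).length),
      (L₁ ++ M ++ L₂)[i] ∈ A ↔ L₁.length ≤ i ∧ i < L₁.length + M.length := by
    intro i hi
    simp only [List.getElem_append]
    split_ifs with h h' <;> simp only [List.length_append] at h ⊢
    · exact iff_of_false (h₁ _ (List.getElem_mem _)) (by omega)
    · exact iff_of_true (hM _ (List.getElem_mem _)) (by omega)
    · exact iff_of_false (h₂ _ (List.getElem_mem _)) (by omega)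
  intro p q r hpq hqr hp hr
  simp only [List.get_eq_getElem, key, Fin.le_def] at *
  omega

theorem List.exists_eq_append_cons_of_filter_eq {α : Type*} {p : α → Bool}
    {l pre suf : List α} {x : α} (h : l.filter p = pre ++ x :: suf) :
    ∃ m₁ m₂, l = m₁ ++ x :: m₂ ∧ m₁.filter p = pre := by
  obtain ⟨l₁, l₂, rfl, rfl, h₂⟩ := List.filter_eq_append_iff.mp h
  obtain ⟨k₁, k₂, rfl, hk₁, -, -⟩ := List.filter_eq_cons_iff.mp h₂
  exact ⟨l₁ ++ k₁, k₂, by simp, by simp [List.filter_eq_nil_iff.mpr hk₁]⟩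

section Twins

variable {A : Set V}

theorem IsOpenTwins.neighborSet_subset_CN (hA : IsOpenTwins G A) {v w : V} (hv : v ∈ A)
    (hw : w ∈ A) : G.neighborSet w ⊆ CN G v :=
  hA w hw v hv ▸ Set.subset_insert _ _

theorem Footprints.not_mem_CN_of_twin_mem (hA : IsOpenTwins G A) {L : List V} {a w : V}
    (h : Footprints G L w) (ha : a ∈ L) (haA : a ∈ A) (hwA : w ∈ A) :
    ∀ y ∈ L, w ∉ CN G y := by
  obtain ⟨u, hu, hL⟩ := h
  rcases hu with rfl | hu
  · exact hL
  · exact absurd (hA.neighborSet_subset_CN haA hwA hu) (hL a ha)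

theorem IsLegalSeq.footprints_append_filter_twins (hA : IsOpenTwins G A)
    [DecidablePred (· ∈ A)] {Q R : List V} {a x : V} (hS : IsLegalSeq G (Q ++ x :: R))
    (ha : a ∈ Q) (haA : a ∈ A) :
    Footprints G (Q ++ R.filter (· ∈ A)) x := by
  obtain ⟨u, hux, hQ⟩ := hS Q x R rfl
  refine ⟨u, hux, fun w hw => ?_⟩
  rcases List.mem_append.mp hw with hw | hw
  · exact hQ w hw
  obtain ⟨hwR, hwA⟩ : w ∈ R ∧ w ∈ A := by simpa using hw
  obtain ⟨R₁, R₂, rfl⟩ := List.append_of_mem hwR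
  have hw_self : ∀ y ∈ Q ++ x :: R₁, w ∉ CN G y :=
    (hS (Q ++ x :: R₁) w R₂ (by simp)).not_mem_CN_of_twin_mem hA (by simp [ha]) haA hwA
  rintro (rfl | hu)
  · exact hw_self x (by simp) hux
  · exact hQ a ha (hA.neighborSet_subset_CN haA hwA hu)

theorem IsLegalSeq.gather_twins (hA : IsOpenTwins G A) [DecidablePred (· ∈ A)] {P T : List V}
    {a : V} (haA : a ∈ A) (hS : IsLegalSeq G (P ++ a :: T)) :
    IsLegalSeq G (P ++ a :: T.filter (· ∈ A) ++ T.filter (· ∉ A)) := by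
  have hS' : IsLegalSeq G ((P ++ [a]) ++ T) := by simpa using hS
  have key : ∀ m₁ x m₂, T = m₁ ++ x :: m₂ →
      Footprints G (P ++ a :: m₁ ++ m₂.filter (· ∈ A)) x := by
    rintro m₁ x m₂ rfl
    have h : IsLegalSeq G (P ++ a :: m₁ ++ x :: m₂) := by simpa using hS
    exact h.footprints_append_filter_twins hA (by simp) haA
  rw [show P ++ a :: T.filter (· ∈ A) = (P ++ [a]) ++ T.filter (· ∈ A) by simp]
  refine isLegalSeq_append.mpr
    ⟨isLegalSeq_append.mpr ⟨(isLegalSeq_append.mp hS').1, ?_⟩, ?_⟩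
  · intro pre x suf h
    obtain ⟨m₁, m₂, hT, rfl⟩ := List.exists_eq_append_cons_of_filter_eq h
    refine (key m₁ x m₂ hT).mono fun y => ?_
    simp only [List.mem_append, List.mem_cons, List.mem_filter]
    tauto
  · intro pre x suf h
    obtain ⟨m₁, m₂, hT, rfl⟩ := List.exists_eq_append_cons_of_filter_eq h
    have hxT : x ∈ T.filter (· ∉ A) := by rw [h]; simp
    have hx : x ∉ A := by simpa using (List.mem_filter.mp hxT).2
    have hT₁ : T.filter (· ∈ A) = m₁.filter (· ∈ A) ++ m₂.filter (· ∈ A) := by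
      simp [hT, List.filter_append, hx]
    refine (key m₁ x m₂ hT).mono fun y => ?_
    rw [hT₁]
    simp only [List.mem_append, List.mem_cons, List.mem_filter]
    tauto

end Twins

theorem exists_grundy_seq_twins_consecutive_general {V : Type*} [Fintype V]
    (G : SimpleGraph V) (A : Set V)
    (hA : ∀ u ∈ A, ∀ v ∈ A, G.neighborSet u = G.neighborSet v) :
    ∃ S : List V, IsDomSeq G S ∧ S.length = grundyDom G ∧
      ∀ p q r : Fin S.length, p ≤ q → q ≤ r →
        S.get p ∈ A → S.get r ∈ A → S.get q ∈ A := by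
  classical
  obtain ⟨S, hS, hlen⟩ := exists_isDomSeq_length_eq_grundyDom G
  cases hSA : S.filter (· ∈ A) with
  | nil =>
    have hnotA : ∀ y ∈ S, y ∉ A := by simpa [List.filter_eq_nil_iff] using hSA
    exact ⟨S, hS, hlen, appearConsecutively_append (L₁ := []) (M := []) (by simp) (by simp) hnotA⟩
  | cons a _ =>
    obtain ⟨P, T, rfl, hPA, haA, -⟩ := List.filter_eq_cons_iff.mp hSA
    simp only [decide_eq_true_eq] at hPA haA
    have hperm : (P ++ a :: T.filter (· ∈ A) ++ T.filter (· ∉ A)).Perm (P ++ a :: T) := by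
      simpa using (List.filter_append_perm (· ∈ A) T).append_left (P ++ [a])
    have hleg := (isCNSeq_iff_nodup_isLegalSeq.mp hS.1).2.gather_twins hA haA
    exact ⟨_, hS.of_perm hperm hleg, hperm.length_eq.trans hlen,
      appearConsecutively_append hPA (by simpa using haA) (by simp)⟩

/-- If `A` is a set of open twins in `G`, then there is a Grundy dominating sequence
in which the vertices of `A` that appear, appear consecutively. -/
theorem exists_grundy_seq_twins_consecutive {V : Type*} [Fintype V] [DecidableEq V]
    (G : SimpleGraph V) (A : Set V)
    (hA : ∀ u ∈ A, ∀ v ∈ A, G.neighborSet u = G.neighborSet v) :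
    ∃ S : List V, IsDomSeq G S ∧ S.length = grundyDom G ∧
      ∀ p q r : Fin S.length, p ≤ q → q ≤ r →
        S.get p ∈ A → S.get r ∈ A → S.get q ∈ A :=
  exists_grundy_seq_twins_consecutive_general G A hA
end

section
/- Let G be a chain graph without isolated vertices, with open-twin partitions X_1, ..., X_k of X and Y_1, ..., Y_k of Y. If A is a maximum independent set of G intersecting both X and Y, then A = (∪_{j=1}^{i} X_j) ∪ (∪_{j=i+1}^{k} Y_j) for some i ∈ [k−1], so α(G) = max over i ∈ [k−1] of Σ_{j≤i}|X_j| + Σ_{j>i}|Y_j| (when this exceeds |X| and |Y|). -/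
open Finset

variable {V : Type*}

/-- The (common) neighborhood of a set of vertices. -/
def nb {V : Type*} [Fintype V] [DecidableEq V] (G : SimpleGraph V) [DecidableRel G.Adj]
    (s : Finset V) : Finset V :=
  s.biUnion (fun v => G.neighborFinset v)

/-- A maximum independent set of a chain graph meeting both sides is of the form
`(∪_{j ≤ i} X_j) ∪ (∪_{j > i} Y_j)` for some `i ∈ [k-1]` (classes indexed from `0`:
the first `i` classes of `X` together with the last `k - i` classes of `Y`,
for some `1 ≤ i ≤ k - 1`). -/
theorem chain_max_indep_structure {V : Type*} [Fintype V] [DecidableEq V]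
    (G : SimpleGraph V) [DecidableRel G.Adj] (X Y : Finset V) (k : ℕ) (Xp Yp : ℕ → Finset V)
    (hXY : Disjoint X Y) (hcover : X ∪ Y = Finset.univ)
    (hXind : ∀ x ∈ X, ∀ x' ∈ X, ¬ G.Adj x x')
    (hYind : ∀ y ∈ Y, ∀ y' ∈ Y, ¬ G.Adj y y')
    (hchain : ∀ x ∈ X, ∀ x' ∈ X,
      G.neighborFinset x ⊆ G.neighborFinset x' ∨ G.neighborFinset x' ⊆ G.neighborFinset x)
    (hiso : ∀ v : V, ∃ u, G.Adj v u)
    (hXpne : ∀ i, i < k → (Xp i).Nonempty)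
    (hXpsub : ∀ i, i < k → Xp i ⊆ X)
    (hXpdisj : ∀ i j, i < k → j < k → i ≠ j → Disjoint (Xp i) (Xp j))
    (hXpun : (Finset.range k).biUnion Xp = X)
    (htwin : ∀ i, i < k → ∀ x ∈ Xp i, ∀ y ∈ Xp i, G.neighborFinset x = G.neighborFinset y)
    (hmono : ∀ i j, i < j → j < k → nb G (Xp i) ⊂ nb G (Xp j))
    (hY0 : Yp 0 = nb G (Xp 0))
    (hYi : ∀ i, 0 < i → i < k →
      Yp i = nb G (Xp i) \ (Finset.range i).biUnion (fun j => nb G (Xp j)))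
    (A : Finset V) (hAind : ∀ u ∈ A, ∀ v ∈ A, ¬ G.Adj u v)
    (hAmax : ∀ B : Finset V, (∀ u ∈ B, ∀ v ∈ B, ¬ G.Adj u v) → B.card ≤ A.card)
    (hAX : (A ∩ X).Nonempty) (hAY : (A ∩ Y).Nonempty) :
    ∃ i, 1 ≤ i ∧ i ≤ k - 1 ∧
      A = (Finset.range i).biUnion Xp ∪ (Finset.Ico i k).biUnion Yp := by
  classical
  -- nb is monotone along the chain
  have hnbmono : ∀ j r, j ≤ r → r < k → nb G (Xp j) ⊆ nb G (Xp r) := by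
    intro j r hjr hrk
    rcases eq_or_lt_of_le hjr with h | h
    · subst h; exact subset_rfl
    · exact (hmono j r h hrk).1
  -- Yp m ⊆ nb (Xp m)
  have hYpnb : ∀ m, m < k → Yp m ⊆ nb G (Xp m) := by
    intro m hm
    rcases Nat.eq_zero_or_pos m with h0 | h0
    · subst h0; rw [hY0]
    · rw [hYi m h0 hm]; exact sdiff_subset
  -- Yp m ⊆ Y
  have hYpY : ∀ m, m < k → Yp m ⊆ Y := by
    intro m hm y hy
    have hy' := hYpnb m hm hy
    rw [nb, mem_biUnion] at hy'
    obtain ⟨x, hx, hyx⟩ := hy'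
    have hxX : x ∈ X := hXpsub m hm hx
    have hadj : G.Adj x y := by rwa [SimpleGraph.mem_neighborFinset] at hyx
    have hyu : y ∈ X ∪ Y := by rw [hcover]; exact mem_univ y
    rcases mem_union.1 hyu with h | h
    · exact absurd hadj (hXind x hxX y h)
    · exact h
  -- negative adjacency: y ∈ Yp m, x ∈ Xp r, r < m → ¬ Adj x y
  have hneg : ∀ m, m < k → ∀ r, r < m → ∀ y ∈ Yp m, ∀ x ∈ Xp r, ¬ G.Adj x y := by
    intro m hm r hrm y hy x hx hadj
    have h0 : 0 < m := Nat.lt_of_le_of_lt (Nat.zero_le r) hrm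
    rw [hYi m h0 hm, mem_sdiff] at hy
    apply hy.2
    rw [mem_biUnion]
    refine ⟨r, mem_range.2 hrm, ?_⟩
    rw [nb, mem_biUnion]
    exact ⟨x, hx, (SimpleGraph.mem_neighborFinset ..).2 hadj⟩
  -- positive adjacency: y ∈ Yp j, j ≤ r < k, x ∈ Xp r → Adj x y
  have hpos : ∀ j r, j ≤ r → r < k → ∀ y ∈ Yp j, ∀ x ∈ Xp r, G.Adj x y := by
    intro j r hjr hrk y hy x hx
    have hjk : j < k := Nat.lt_of_le_of_lt hjr hrk
    have hynb : y ∈ nb G (Xp r) := hnbmono j r hjr hrk (hYpnb j hjk hy)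
    rw [nb, mem_biUnion] at hynb
    obtain ⟨x', hx', hyx'⟩ := hynb
    rw [htwin r hrk x' hx' x hx] at hyx'
    exact (SimpleGraph.mem_neighborFinset ..).1 hyx'
  -- each y ∈ Y lies in some Yp m, m < k
  have hYcov : ∀ y ∈ Y, ∃ m, m < k ∧ y ∈ Yp m := by
    intro y hy
    obtain ⟨u, hu⟩ := hiso y
    have huX : u ∈ X := by
      have huu : u ∈ X ∪ Y := by rw [hcover]; exact mem_univ u
      rcases mem_union.1 huu with h | h
      · exact h
      · exact absurd hu (hYind y hy u h)
    rw [← hXpun, mem_biUnion] at huX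
    obtain ⟨j, hj, hju⟩ := huX
    have hP : ∃ m, m < k ∧ y ∈ nb G (Xp m) := by
      refine ⟨j, mem_range.1 hj, ?_⟩
      rw [nb, mem_biUnion]
      exact ⟨u, hju, (SimpleGraph.mem_neighborFinset ..).2 hu.symm⟩
    obtain ⟨hmk, hmnb⟩ := Nat.find_spec hP
    refine ⟨Nat.find hP, hmk, ?_⟩
    generalize hmdef : Nat.find hP = m at hmk hmnb ⊢
    rcases Nat.eq_zero_or_pos m with h0 | h0
    · rw [h0] at hmnb ⊢; rwa [hY0]
    · rw [hYi m h0 hmk, mem_sdiff]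
      refine ⟨hmnb, ?_⟩
      rw [mem_biUnion]
      rintro ⟨r, hr, hynb⟩
      have hrm : r < m := mem_range.1 hr
      rw [← hmdef] at hrm
      exact Nat.find_min hP hrm ⟨Nat.lt_trans (mem_range.1 hr) hmk, hynb⟩
  -- take the largest index s with A ∩ Xp s nonempty
  set S := (Finset.range k).filter (fun j => (A ∩ Xp j).Nonempty) with hSdef
  have hSne : S.Nonempty := by
    obtain ⟨x0, hx0⟩ := hAX
    rw [mem_inter] at hx0
    have := hx0.2
    rw [← hXpun, mem_biUnion] at this
    obtain ⟨j, hj, hjx⟩ := this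
    exact ⟨j, mem_filter.2 ⟨hj, ⟨x0, mem_inter.2 ⟨hx0.1, hjx⟩⟩⟩⟩
  set s := S.max' hSne with hsdef
  have hsS : s ∈ S := S.max'_mem hSne
  have hsk : s < k := mem_range.1 (mem_filter.1 hsS).1
  obtain ⟨xs, hxs⟩ := (mem_filter.1 hsS).2
  rw [mem_inter] at hxs
  -- A contains no vertex of Yp j for j ≤ s
  have hAYp : ∀ j, j ≤ s → ∀ y ∈ Yp j, y ∉ A := by
    intro j hjs y hy hyA
    exact hAind xs hxs.1 y hyA (hpos j s hjs hsk y hy xs hxs.2)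
  set i := s + 1 with hidef
  set B := (Finset.range i).biUnion Xp ∪ (Finset.Ico i k).biUnion Yp with hBdef
  -- A ⊆ B, and get a witness m ≥ i from A ∩ Y
  obtain ⟨y0, hy0⟩ := hAY
  rw [mem_inter] at hy0
  obtain ⟨m0, hm0k, hy0m⟩ := hYcov y0 hy0.2
  have him0 : i ≤ m0 := by
    by_contra h
    exact hAYp m0 (by omega) y0 hy0m hy0.1
  have hAB : A ⊆ B := by
    intro a ha
    have hau : a ∈ X ∪ Y := by rw [hcover]; exact mem_univ a
    rcases mem_union.1 hau with h | h
    · rw [← hXpun, mem_biUnion] at h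
      obtain ⟨j, hj, hja⟩ := h
      have hjS : j ∈ S := mem_filter.2 ⟨hj, ⟨a, mem_inter.2 ⟨ha, hja⟩⟩⟩
      have hjs : j ≤ s := S.le_max' j hjS
      exact mem_union.2 (Or.inl (mem_biUnion.2 ⟨j, mem_range.2 (by omega), hja⟩))
    · obtain ⟨m, hmk, hym⟩ := hYcov a h
      have him : i ≤ m := by
        by_contra hcon
        exact hAYp m (by omega) a hym ha
      exact mem_union.2 (Or.inr (mem_biUnion.2 ⟨m, mem_Ico.2 ⟨him, hmk⟩, hym⟩))
  -- B is independent
  have hBind : ∀ u ∈ B, ∀ v ∈ B, ¬ G.Adj u v := by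
    intro u hu v hv
    rcases mem_union.1 hu with hu' | hu' <;> rcases mem_union.1 hv with hv' | hv'
    · obtain ⟨j1, hj1, hu1⟩ := mem_biUnion.1 hu'
      obtain ⟨j2, hj2, hv1⟩ := mem_biUnion.1 hv'
      exact hXind u (hXpsub j1 (by have := mem_range.1 hj1; omega) hu1) v
        (hXpsub j2 (by have := mem_range.1 hj2; omega) hv1)
    · obtain ⟨j1, hj1, hu1⟩ := mem_biUnion.1 hu'
      obtain ⟨m, hm, hv1⟩ := mem_biUnion.1 hv'
      rw [mem_Ico] at hm
      exact hneg m hm.2 j1 (by have := mem_range.1 hj1; omega) v hv1 u hu1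
    · obtain ⟨m, hm, hu1⟩ := mem_biUnion.1 hu'
      obtain ⟨j2, hj2, hv1⟩ := mem_biUnion.1 hv'
      rw [mem_Ico] at hm
      intro hadj
      exact hneg m hm.2 j2 (by have := mem_range.1 hj2; omega) u hu1 v hv1 hadj.symm
    · obtain ⟨m1, hm1, hu1⟩ := mem_biUnion.1 hu'
      obtain ⟨m2, hm2, hv1⟩ := mem_biUnion.1 hv'
      rw [mem_Ico] at hm1 hm2
      exact hYind u (hYpY m1 hm1.2 hu1) v (hYpY m2 hm2.2 hv1)
  have hcard : B.card ≤ A.card := hAmax B hBind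
  have hAeqB : A = B := Finset.eq_of_subset_of_card_le hAB hcard
  exact ⟨i, by omega, by omega, hAeqB⟩
end

section
/- Let G be a graph, G' the co-bipartite graph obtained from G by taking two clique copies V_1 = {v_i^1} and V_2 = {v_i^2} of V(G) with v_i^1 adjacent to v_j^2 iff v_j ∈ N_G[v_i]. Then any dominating sequence of G' whose first vertex lies in V_1 contains at most one vertex of V_2, and if it contains a vertex of V_2 then that vertex is the last vertex of the sequence. -/
open Finset

variable {V : Type*}

/-! A legal sequence must stop as soon as its closed neighborhoods cover the graph. In `G'` the
two copies are cliques, so the first vertex (in `V₁`) together with any vertex of `V₂` already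
covers everything; hence a vertex of `V₂` can only be the last one, and as the sequence has
distinct vertices, there is at most one such vertex. -/

theorem IsCNSeq.length_le_of_forall_mem_CN {G : SimpleGraph V} {S : List V} (hS : IsCNSeq G S)
    {k : ℕ} (hk : ∀ v, ∃ j : Fin S.length, (j : ℕ) < k ∧ v ∈ CN G (S.get j)) :
    S.length ≤ k := by
  by_contra! hlt
  obtain ⟨u, -, hu⟩ := hS.2 ⟨k, hlt⟩
  obtain ⟨j, hjk, hj⟩ := hk u
  exact hu j hjk hj

theorem List.length_filter_le_one_of_forall_eq_length_sub_one {α : Type*} {l : List α}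
    (hl : l.Nodup) {p : α → Bool} (h : ∀ i : Fin l.length, p (l.get i) → (i : ℕ) = l.length - 1) :
    (l.filter p).length ≤ 1 := by
  have hlast : ∀ w ∈ l.filter p, ∃ i : Fin l.length, l.get i = w ∧ (i : ℕ) = l.length - 1 := by
    intro w hw
    obtain ⟨hwl, hpw⟩ := List.mem_filter.mp hw
    obtain ⟨i, rfl⟩ := List.get_of_mem hwl
    exact ⟨i, rfl, h i hpw⟩
  have hnd := hl.filter p
  rcases hf : l.filter p with _ | ⟨a, _ | ⟨b, t⟩⟩
  · simp
  · simp
  rw [hf] at hlast hnd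
  obtain ⟨i, rfl, hi⟩ := hlast a (by simp)
  obtain ⟨j, rfl, hj⟩ := hlast b (by simp)
  have hij : l.get i = l.get j := congrArg l.get (Fin.ext (hi.trans hj.symm))
  exact absurd (hij ▸ List.mem_cons_self) (List.nodup_cons.mp hnd).1

theorem cobip_mem_CN_inl_or_mem_CN_inr (G : SimpleGraph V) (a b : V) (w : V ⊕ V) :
    w ∈ CN (cobip G) (Sum.inl a) ∨ w ∈ CN (cobip G) (Sum.inr b) := by
  rcases w with x | y
  · exact .inl <| by by_cases h : x = a <;> simp [CN, cobip, h, Ne.symm]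
  · exact .inr <| by by_cases h : y = b <;> simp [CN, cobip, h, Ne.symm]

theorem IsCNSeq.cobip_eq_length_sub_one_of_isRight {G : SimpleGraph V} {S : List (V ⊕ V)}
    (hS : IsCNSeq (cobip G) S) (hne : S ≠ []) (hhead : (S.head hne).isLeft)
    (i : Fin S.length) (hi : (S.get i).isRight) : (i : ℕ) = S.length - 1 := by
  obtain ⟨a, ha⟩ := Sum.isLeft_iff.mp hhead
  obtain ⟨b, hb⟩ := Sum.isRight_iff.mp hi
  have h0 : 0 < S.length := List.length_pos_iff.mpr hne
  have hcover : S.length ≤ i + 1 := hS.length_le_of_forall_mem_CN fun w => by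
    rcases cobip_mem_CN_inl_or_mem_CN_inr G a b w with hw | hw
    · exact ⟨⟨0, h0⟩, Nat.succ_pos _, by
        rwa [List.get_eq_getElem, ← List.head_eq_getElem_zero hne, ha]⟩
    · exact ⟨i, by omega, hb ▸ hw⟩
  omega

theorem cobip_domSeq_at_most_one_inr_general {V : Type*}
    (G : SimpleGraph V) (S : List (V ⊕ V)) (hS : IsDomSeq (cobip G) S)
    (hne : S ≠ []) (hhead : (S.head hne).isLeft) :
    (S.filter (fun w => w.isRight)).length ≤ 1 ∧
      ∀ i : Fin S.length, (S.get i).isRight → (i : ℕ) = S.length - 1 :=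
  have hlast := hS.1.cobip_eq_length_sub_one_of_isRight hne hhead
  ⟨List.length_filter_le_one_of_forall_eq_length_sub_one hS.1.1 hlast, hlast⟩

/-- Any dominating sequence of `G'` starting in `V₁` contains at most one vertex of `V₂`,
and if it contains one, it is the last vertex of the sequence. -/
theorem cobip_domSeq_at_most_one_inr {V : Type*} [Fintype V] [DecidableEq V]
    (G : SimpleGraph V) (S : List (V ⊕ V)) (hS : IsDomSeq (cobip G) S)
    (hne : S ≠ []) (hhead : (S.head hne).isLeft) :
    (S.filter (fun w => w.isRight)).length ≤ 1 ∧
      ∀ i : Fin S.length, (S.get i).isRight → (i : ℕ) = S.length - 1 :=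
  cobip_domSeq_at_most_one_inr_general G S hS hne hhead
end
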